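/- arXiv:2205.15861 — 9 statements merged into one kernel-verified Lean document; each statement's English description precedes it below -/
import Mathlib

section
/- For an odd prime r and 0 < k ≤ (r-1)/2, the integer c_k = (r/(r-k)) * binomial(r-k, k) is divisible by r. -/
/-!
Write `n = r - k`. Since `0 < k < r` and `r` is prime, `n` is coprime to `k`, and the absorption
identity `n * C(n-1, k-1) = C(n, k) * k` then forces `n ∣ C(n, k)`. Hence
`c_k = r * (C(n, k) / n)` with `C(n, k) / n` an integer.
-/

theorem Nat.dvd_choose_of_coprime {n k : ℕ} (hk : 0 < k) (hnk : n.Coprime k) :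
    n ∣ n.choose k := by
  obtain ⟨k, rfl⟩ := Nat.exists_eq_add_one_of_ne_zero hk.ne'
  rcases n with _ | n
  · exact dvd_refl _
  · exact hnk.dvd_of_dvd_mul_right ⟨_, (Nat.add_one_mul_choose_eq n k).symm⟩

theorem Nat.Prime.coprime_sub_self {r k : ℕ} (hr : r.Prime) (hk0 : 0 < k) (hkr : k < r) :
    (r - k).Coprime k :=
  (Nat.coprime_sub_self_left hkr.le).mpr (Nat.coprime_of_lt_prime hk0.ne' hkr hr)

theorem ck_divisible_by_r_general (r k : ℕ) (hr : r.Prime)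
    (hk0 : 0 < k) (hk : k ≤ (r - 1) / 2) :
    ∃ m : ℤ, ((r : ℚ) / ((r : ℚ) - (k : ℚ))) * ((r - k).choose k : ℚ) = (r : ℚ) * (m : ℚ) := by
  have hkr : k < r := by omega
  obtain ⟨m, hm⟩ := Nat.dvd_choose_of_coprime hk0 (hr.coprime_sub_self hk0 hkr)
  refine ⟨m, ?_⟩
  have hsub : (r : ℚ) - k = ((r - k : ℕ) : ℚ) := by push_cast [hkr.le]; ring
  have hsub0 : ((r - k : ℕ) : ℚ) ≠ 0 := by exact_mod_cast (Nat.sub_pos_of_lt hkr).ne'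
  rw [hsub, hm]
  push_cast
  field_simp

/-- For an odd prime `r` and `0 < k ≤ (r-1)/2`, the integer
`c_k = (r/(r-k)) * (r-k).choose k` is divisible by `r`. -/
theorem ck_divisible_by_r (r k : ℕ) (hr : r.Prime) (hodd : Odd r)
    (hk0 : 0 < k) (hk : k ≤ (r - 1) / 2) :
    ∃ m : ℤ, ((r : ℚ) / ((r : ℚ) - (k : ℚ))) * ((r - k).choose k : ℚ) = (r : ℚ) * (m : ℚ) :=
  ck_divisible_by_r_general r k hr hk0 hk
end

section
/- For an odd prime r, the polynomial h(x^2+2) = \sum_{k=0}^{(r-1)/2} c_k x^{r-1-2k} (where c_k = (r/(r-k))·C(r-k,k)) is irreducible over the rationals. -/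
/-!
The coefficients `c_k = r / (r - k) * C(r - k, k)` are integers, and `(r - k) c_k = r C(r - k, k)`
with `r - k` prime to `r` shows `r ∣ c_k` for `0 < k < r`. The leading coefficient is `c_0 = 1`
and the constant one is `c_{(r-1)/2} = r`, so the integer polynomial is Eisenstein at `r`, and
Gauss's lemma carries irreducibility from `ℤ` to `ℚ`.
-/

open Polynomial Finset

/-- The coefficient of `x^(n-2k)` in the Lucas polynomial `L_n`, in the closed form that shows
`n / (n - k) * C(n - k, k)` is an integer. -/
def lucasCoeff (n k : ℕ) : ℕ :=
  if k = 0 then 1 else (n - k).choose k + (n - k - 1).choose (k - 1)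

theorem sub_mul_lucasCoeff {n k : ℕ} (hk : k < n) :
    (n - k) * lucasCoeff n k = n * (n - k).choose k := by
  rcases Nat.eq_zero_or_pos k with rfl | hk0
  · simp [lucasCoeff]
  obtain ⟨j, rfl⟩ : ∃ j, k = j + 1 := ⟨k - 1, by omega⟩
  obtain ⟨i, hi⟩ : ∃ i, n - (j + 1) = i + 1 := ⟨n - j - 2, by omega⟩
  have hpascal : (i + 1) * i.choose j = (i + 1).choose (j + 1) * (j + 1) :=
    Nat.add_one_mul_choose_eq i j
  have hn : n = (i + 1) + (j + 1) := by omega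
  simp only [lucasCoeff, Nat.add_one_ne_zero, if_false, hi, Nat.add_sub_cancel]
  rw [hn]
  linear_combination hpascal

theorem lucasCoeff_eq_div {K : Type*} [Field K] [CharZero K] {n k : ℕ} (hk : k < n) :
    (lucasCoeff n k : K) = n / (n - k) * (n - k).choose k := by
  have hsub : (n : K) - k ≠ 0 := sub_ne_zero.mpr (by exact_mod_cast hk.ne')
  have h := congrArg (Nat.cast (R := K)) (sub_mul_lucasCoeff hk)
  push_cast [Nat.cast_sub hk.le] at h
  rw [div_mul_eq_mul_div, eq_div_iff hsub]
  linear_combination h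

theorem Nat.Prime.dvd_lucasCoeff {p k : ℕ} (hp : p.Prime) (hk0 : 0 < k) (hk : k < p) :
    p ∣ lucasCoeff p k := by
  have hcop : p.Coprime (p - k) :=
    hp.coprime_iff_not_dvd.mpr (Nat.not_dvd_of_pos_of_lt (by omega) (by omega))
  exact hcop.dvd_of_dvd_mul_left ⟨_, sub_mul_lucasCoeff hk⟩

theorem lucasCoeff_two_mul_add_one_self (m : ℕ) : lucasCoeff (2 * m + 1) m = 2 * m + 1 := by
  have h := sub_mul_lucasCoeff (n := 2 * m + 1) (k := m) (by omega)
  rw [show 2 * m + 1 - m = m + 1 by omega, Nat.choose_succ_self_right, mul_comm (2 * m + 1)] at h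
  exact Nat.eq_of_mul_eq_mul_left (Nat.succ_pos m) h

section SumMonomials

variable {R ι : Type*} [Semiring R] {s : Finset ι} {a : ι → R} {e : ι → ℕ}

theorem coeff_sum_C_mul_X_pow_mem {P : Ideal R} {n : ℕ} (h : ∀ k ∈ s, e k = n → a k ∈ P) :
    (∑ k ∈ s, C (a k) * X ^ e k).coeff n ∈ P := by
  rw [finsetSum_coeff]
  refine Ideal.sum_mem _ fun k hk => ?_
  rw [coeff_C_mul_X_pow]
  split_ifs with hn
  · exact h k hk hn.symm
  · exact P.zero_mem

theorem coeff_sum_C_mul_X_pow_of_injOn (he : Set.InjOn e s) {i : ι} (hi : i ∈ s) :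
    (∑ k ∈ s, C (a k) * X ^ e k).coeff (e i) = a i := by
  rw [finsetSum_coeff, sum_eq_single_of_mem i hi]
  · simp
  · intro k hk hki
    rw [coeff_C_mul_X_pow, if_neg fun h => hki (he hk hi h.symm)]

end SumMonomials

/-- The polynomial `h(x² + 2)` of the paper, with integer coefficients `lucasCoeff r k`. -/
noncomputable def hCompSqAddTwo (r : ℕ) : ℤ[X] :=
  ∑ k ∈ range ((r - 1) / 2 + 1), C (lucasCoeff r k : ℤ) * X ^ (r - 1 - 2 * k)

section hCompSqAddTwo

variable {r : ℕ}

theorem coeff_hCompSqAddTwo {k : ℕ} (hk : k ≤ (r - 1) / 2) :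
    (hCompSqAddTwo r).coeff (r - 1 - 2 * k) = lucasCoeff r k := by
  have hinj : Set.InjOn (fun k => r - 1 - 2 * k) (range ((r - 1) / 2 + 1)) := by
    intro i hi j hj h
    simp only [coe_range, Set.mem_Iio] at hi hj h
    omega
  exact coeff_sum_C_mul_X_pow_of_injOn (a := fun k => (lucasCoeff r k : ℤ)) hinj
    (mem_range.mpr (by omega))

theorem natDegree_hCompSqAddTwo_le : (hCompSqAddTwo r).natDegree ≤ r - 1 :=
  natDegree_sum_le_of_forall_le _ _ fun _ _ => (natDegree_C_mul_X_pow_le _ _).trans (by omega)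

theorem coeff_hCompSqAddTwo_sub_one : (hCompSqAddTwo r).coeff (r - 1) = 1 := by
  simpa [lucasCoeff] using coeff_hCompSqAddTwo (r := r) (k := 0) (Nat.zero_le _)

theorem hCompSqAddTwo_monic : (hCompSqAddTwo r).Monic :=
  monic_of_natDegree_le_of_coeff_eq_one _ natDegree_hCompSqAddTwo_le coeff_hCompSqAddTwo_sub_one

theorem natDegree_hCompSqAddTwo : (hCompSqAddTwo r).natDegree = r - 1 :=
  natDegree_eq_of_le_of_coeff_ne_zero natDegree_hCompSqAddTwo_le
    (coeff_hCompSqAddTwo_sub_one ▸ one_ne_zero)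

theorem coeff_hCompSqAddTwo_zero (hodd : Odd r) : (hCompSqAddTwo r).coeff 0 = r := by
  obtain ⟨m, rfl⟩ := hodd
  have h := coeff_hCompSqAddTwo (r := 2 * m + 1) (k := m) (by omega)
  rwa [show 2 * m + 1 - 1 - 2 * m = 0 by omega, lucasCoeff_two_mul_add_one_self] at h

theorem hCompSqAddTwo_isEisensteinAt (hp : r.Prime) (hodd : Odd r) :
    (hCompSqAddTwo r).IsEisensteinAt (Ideal.span {(r : ℤ)}) where
  leading := by
    rw [hCompSqAddTwo_monic.leadingCoeff, Ideal.mem_span_singleton]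
    exact_mod_cast hp.not_dvd_one
  mem {n} hn := by
    rw [natDegree_hCompSqAddTwo] at hn
    refine coeff_sum_C_mul_X_pow_mem fun k hk hkn => ?_
    rw [Ideal.mem_span_singleton]
    exact_mod_cast hp.dvd_lucasCoeff (by omega) (by simp at hk; omega)
  notMem := by
    rw [coeff_hCompSqAddTwo_zero hodd, Ideal.span_singleton_pow, Ideal.mem_span_singleton]
    intro h
    have h' : r ^ 2 ∣ r ^ 1 := by rw [pow_one]; exact_mod_cast h
    exact absurd ((Nat.pow_dvd_pow_iff_le_right hp.one_lt).mp h') (by norm_num)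

theorem map_hCompSqAddTwo (hr : 0 < r) :
    (hCompSqAddTwo r).map (Int.castRingHom ℚ) = ∑ k ∈ range ((r - 1) / 2 + 1),
      C ((r : ℚ) / ((r : ℚ) - (k : ℚ)) * ((r - k).choose k : ℚ)) * X ^ (r - 1 - 2 * k) := by
  rw [hCompSqAddTwo, Polynomial.map_sum]
  refine sum_congr rfl fun k hk => ?_
  rw [Polynomial.map_mul, map_C, Polynomial.map_pow, map_X, eq_intCast, Int.cast_natCast,
    lucasCoeff_eq_div (by simp at hk; omega)]

end hCompSqAddTwo

/-- For an odd prime `r`, the polynomial `h(x^2+2) = ∑_{k=0}^{(r-1)/2} c_k x^(r-1-2k)`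
(where `c_k = (r/(r-k)) * (r-k).choose k`) is irreducible over `ℚ`. -/
theorem h_of_x_sq_add_two_irreducible (r : ℕ) (hr : r.Prime) (hodd : Odd r) :
    Irreducible (∑ k ∈ Finset.range ((r - 1) / 2 + 1),
      Polynomial.C (((r : ℚ) / ((r : ℚ) - (k : ℚ))) * ((r - k).choose k : ℚ)) *
        Polynomial.X ^ (r - 1 - 2 * k) : ℚ[X]) := by
  have hirr : Irreducible (hCompSqAddTwo r) :=
    (hCompSqAddTwo_isEisensteinAt hr hodd).irreducible
      ((Ideal.span_singleton_prime (by exact_mod_cast hr.ne_zero)).mpr (Nat.prime_iff_prime_int.mp hr))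
      hCompSqAddTwo_monic.isPrimitive (by rw [natDegree_hCompSqAddTwo]; have := hr.two_le; omega)
  rw [← map_hCompSqAddTwo hr.pos]
  exact (IsPrimitive.Int.irreducible_iff_irreducible_map_cast hCompSqAddTwo_monic.isPrimitive).mp hirr
end

section
/- For an odd prime r, with i a primitive fourth root of unity and z an indeterminate, the polynomial identity H(x,z) = 2(iz)^r T_r(x/(2iz)) holds, where H(x,z) = z^{r-1} · x · h((x/z)^2 + 2) and T_r is the r-th Chebyshev polynomial of the first kind. -/
open Polynomial Finset Complex

/-!
Write `x / z = v - v⁻¹`. Since `(v - v⁻¹)² + 2 - (ζʲ + ζ⁻ʲ) = v⁻² (v² - ζʲ)(v² - ζ⁻ʲ)` and the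
`ζʲ`, `ζ⁻ʲ` for `1 ≤ j ≤ (r-1)/2` together with `1` run through all `r`-th roots of unity, the
left side collapses to `zʳ (vʳ - v⁻ʳ)`. On the right, `x / (2iz)` is half of `w + w⁻¹` with
`w = -iv`, so `2 Tᵣ(x / (2iz)) = wʳ + w⁻ʳ`, and `iʳ (wʳ + w⁻ʳ) = vʳ - v⁻ʳ` because `r` is odd.
-/

theorem Finset.prod_range_two_mul_add_one_eq_mul_prod_pairs {M : Type*} [CommMonoid M]
    (f : ℕ → M) (m : ℕ) :
    ∏ k ∈ range (2 * m + 1), f k = f 0 * ∏ j ∈ Icc 1 m, (f j * f (2 * m + 1 - j)) := by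
  rw [prod_range_succ', mul_comm, two_mul, prod_range_add,
    ← prod_range_reflect (fun k => f (m + k + 1)) m, ← prod_mul_distrib,
    ← Ico_add_one_right_eq_Icc, ← zero_add 1, ← prod_Ico_add', zero_add, ← range_eq_Ico]
  refine congrArg _ (prod_congr rfl fun k hk => ?_)
  have := mem_range.1 hk
  congr 2
  omega

theorem IsPrimitiveRoot.sub_one_mul_prod_pairs_eq {K : Type*} [Field K] {ζ : K} {m : ℕ}
    (hζ : IsPrimitiveRoot ζ (2 * m + 1)) (Y : K) :
    (Y - 1) * ∏ j ∈ Icc 1 m, ((Y - ζ ^ j) * (Y - ζ⁻¹ ^ j)) = Y ^ (2 * m + 1) - 1 := by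
  have hprod := congrArg (eval Y) (X_pow_sub_C_eq_prod hζ (2 * m).succ_pos (one_pow _))
  simp only [eval_sub, eval_pow, eval_X, eval_C, eval_prod, mul_one] at hprod
  rw [hprod, prod_range_two_mul_add_one_eq_mul_prod_pairs, pow_zero]
  refine congrArg _ (prod_congr rfl fun j hj => ?_)
  rw [pow_sub₀ _ (hζ.ne_zero (2 * m).succ_ne_zero) (by rw [mem_Icc] at hj; omega), hζ.pow_eq_one,
    one_mul, inv_pow]

theorem IsPrimitiveRoot.sub_inv_mul_prod_eq {K : Type*} [Field K] {ζ : K} {m : ℕ}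
    (hζ : IsPrimitiveRoot ζ (2 * m + 1)) {v : K} (hv : v ≠ 0) :
    (v - v⁻¹) * ∏ j ∈ Icc 1 m, ((v - v⁻¹) ^ 2 + 2 - (ζ ^ j + ζ⁻¹ ^ j)) =
      v ^ (2 * m + 1) - v⁻¹ ^ (2 * m + 1) := by
  have hfactor (j : ℕ) : (v - v⁻¹) ^ 2 + 2 - (ζ ^ j + ζ⁻¹ ^ j) =
      (v ^ 2)⁻¹ * ((v ^ 2 - ζ ^ j) * (v ^ 2 - ζ⁻¹ ^ j)) := by
    have : ζ ^ j * ζ⁻¹ ^ j = 1 := by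
      rw [← mul_pow, mul_inv_cancel₀ (hζ.ne_zero (2 * m).succ_ne_zero), one_pow]
    field_simp
    linear_combination -this
  rw [prod_congr rfl fun j _ => hfactor j, prod_mul_distrib, prod_const, Nat.card_Icc,
    Nat.add_sub_cancel]
  calc (v - v⁻¹) * ((v ^ 2)⁻¹ ^ m * ∏ j ∈ Icc 1 m, ((v ^ 2 - ζ ^ j) * (v ^ 2 - ζ⁻¹ ^ j)))
      = v⁻¹ ^ (2 * m + 1) *
          ((v ^ 2 - 1) * ∏ j ∈ Icc 1 m, ((v ^ 2 - ζ ^ j) * (v ^ 2 - ζ⁻¹ ^ j))) := by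
        simp only [inv_pow]
        field_simp
        ring
    _ = v⁻¹ ^ (2 * m + 1) * ((v ^ 2) ^ (2 * m + 1) - 1) := by
        rw [hζ.sub_one_mul_prod_pairs_eq]
    _ = v ^ (2 * m + 1) - v⁻¹ ^ (2 * m + 1) := by
        simp only [inv_pow]
        field_simp
        ring

theorem Polynomial.Chebyshev.two_mul_T_eval_of_two_mul_eq_add {R : Type*} [CommRing R]
    {a b c : R} (hab : a * b = 1) (hc : 2 * c = a + b) (n : ℕ) :
    2 * (T R n).eval c = a ^ n + b ^ n := by
  have := congrArg (eval c) (C_comp_two_mul_X R n)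
  rw [← dickson_one_one_eval_add_inv a b hab, dickson_one_one_eq_chebyshev_C, ← hc]
  simpa using this.symm

theorem IsAlgClosed.exists_sub_inv_eq {K : Type*} [Field K] [IsAlgClosed K] (u : K) :
    ∃ v ≠ 0, v - v⁻¹ = u := by
  obtain ⟨v, hv⟩ := IsAlgClosed.exists_root (C 1 * X ^ 2 + C (-u) * X + C (-1))
    (by rw [degree_quadratic one_ne_zero]; decide)
  simp only [IsRoot, eval_add, eval_mul, eval_C, eval_pow, eval_X] at hv
  have hv0 : v ≠ 0 := by rintro rfl; simp at hv
  refine ⟨v, hv0, ?_⟩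
  field_simp
  linear_combination hv

theorem H_eq_chebyshev_general (r : ℕ) (hodd : Odd r)
    (ζ : ℂ) (hζ : IsPrimitiveRoot ζ r) (x z : ℂ) (hz : z ≠ 0) :
    z ^ (r - 1) * x * ∏ j ∈ Finset.Icc 1 ((r - 1) / 2), ((x / z) ^ 2 + 2 - (ζ ^ j + ζ⁻¹ ^ j)) =
      2 * (Complex.I * z) ^ r *
        Polynomial.eval (x / (2 * Complex.I * z)) (Polynomial.Chebyshev.T ℂ (r : ℤ)) := by
  obtain ⟨m, rfl⟩ := hodd
  obtain ⟨v, hv, hvx⟩ := IsAlgClosed.exists_sub_inv_eq (x / z)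
  have hx : x = z * (v - v⁻¹) := by rw [hvx]; field_simp
  have hab : -I * v * (I * v⁻¹) = 1 := by
    field_simp
    simp
  have hT := Polynomial.Chebyshev.two_mul_T_eval_of_two_mul_eq_add hab
    (show 2 * (x / (2 * I * z)) = -I * v + I * v⁻¹ by
      rw [hx]
      field_simp
      linear_combination (v ^ 2 - 1) * I_sq)
    (2 * m + 1)
  rw [show (2 * m + 1 - 1) / 2 = m by omega, Nat.add_sub_cancel, ← hvx]
  calc z ^ (2 * m) * x * ∏ j ∈ Icc 1 m, ((v - v⁻¹) ^ 2 + 2 - (ζ ^ j + ζ⁻¹ ^ j))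
      = z ^ (2 * m + 1) * ((v - v⁻¹) * ∏ j ∈ Icc 1 m, ((v - v⁻¹) ^ 2 + 2 - (ζ ^ j + ζ⁻¹ ^ j))) := by
        rw [hx]; ring
    _ = z ^ (2 * m + 1) * (v ^ (2 * m + 1) - v⁻¹ ^ (2 * m + 1)) := by
        rw [hζ.sub_inv_mul_prod_eq hv]
    _ = (I * z) ^ (2 * m + 1) * ((-I * v) ^ (2 * m + 1) + (I * v⁻¹) ^ (2 * m + 1)) := by
        rw [mul_comm I z, mul_pow, mul_assoc]
        congr 1
        rw [mul_add, ← mul_pow, ← mul_pow,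
          show I * (-I * v) = v by linear_combination (-v) * I_sq,
          show I * (I * v⁻¹) = -v⁻¹ by linear_combination v⁻¹ * I_sq,
          Odd.neg_pow ⟨m, rfl⟩, sub_eq_add_neg]
    _ = _ := by rw [← hT]; ring

/-- For an odd prime `r`, with `i` a primitive fourth root of unity and `z ≠ 0`, the identity
`H(x,z) = 2 (iz)^r T_r(x/(2iz))` holds, where
`H(x,z) = z^(r-1) · x · h((x/z)² + 2)` and `h(x) = ∏_{j=1}^{(r-1)/2} (x - ω_j)`,
`ω_j = ζ_r^j + ζ_r^{-j}`, and `T_r` is the `r`-th Chebyshev polynomial of the first kind. -/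
theorem H_eq_chebyshev (r : ℕ) (hr : r.Prime) (hodd : Odd r)
    (ζ : ℂ) (hζ : IsPrimitiveRoot ζ r) (x z : ℂ) (hz : z ≠ 0) :
    z ^ (r - 1) * x * ∏ j ∈ Finset.Icc 1 ((r - 1) / 2), ((x / z) ^ 2 + 2 - (ζ ^ j + ζ⁻¹ ^ j)) =
      2 * (Complex.I * z) ^ r *
        Polynomial.eval (x / (2 * Complex.I * z)) (Polynomial.Chebyshev.T ℂ (r : ℤ)) :=
  H_eq_chebyshev_general r hodd ζ hζ x z hz
end

section
/- For an odd prime r, the derivative of the r-th Chebyshev polynomial of the first kind satisfies d/dx T_r(x) = r·U_{r-1}(x), and U_{r-1}(x/(2i)) = i^{r-1} h(ix) h(-ix), where U_{r-1} is the (r-1)-st Chebyshev polynomial of the second kind, i^2 = -1, and h(x) = \prod_{j=1}^{(r-1)/2}(x - (ζ_r^j + ζ_r^{-j})). -/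
/-!
Put `y = (t + t⁻¹) / 2`. The Chebyshev recurrence gives `(t - t⁻¹) U_n(y) = t^(n+1) - t^-(n+1)`,
while `s^r - 1 = (s - 1) ∏_{k=1}^{r-1} (s - ζ^k)` with the factors for `k` and `r - k` paired off
gives `s^r - 1 = (s - 1) s^m h(s + s⁻¹)` for `r = 2m + 1`. Multiplying the cases `s = t` and
`s = -t` yields `U_{2m}(y) = (-1)^m h(2y) h(-2y)` whenever `t ≠ ±1`, hence as polynomials.
-/

open Polynomial Finset Complex

namespace Polynomial.Chebyshev

theorem sub_mul_S_eval_add {R : Type*} [CommRing R] {x y : R} (hxy : x * y = 1) (n : ℕ) :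
    (x - y) * (S R n).eval (x + y) = x ^ (n + 1) - y ^ (n + 1) := by
  induction n using Nat.twoStepInduction with
  | zero => simp
  | one => simp only [Nat.cast_one, S_one, eval_X]; ring
  | more n ih₀ ih₁ =>
    push_cast at ih₁ ⊢
    rw [S_add_two, eval_sub, eval_mul, eval_X]
    linear_combination (x + y) * ih₁ - ih₀ + (x ^ (n + 1) - y ^ (n + 1)) * hxy

end Polynomial.Chebyshev

theorem IsPrimitiveRoot.sub_one_mul_prod_Icc_sub_pow {R : Type*} [CommRing R] [IsDomain R]
    {ζ : R} {n : ℕ} (hζ : IsPrimitiveRoot ζ (n + 1)) (s : R) :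
    (s - 1) * ∏ k ∈ Icc 1 n, (s - ζ ^ k) = s ^ (n + 1) - 1 := by
  have h := congrArg (eval s) (X_pow_sub_C_eq_prod hζ n.succ_pos (one_pow (n + 1)))
  simp only [eval_sub, eval_pow, eval_X, eval_C, eval_prod, mul_one] at h
  rw [h, prod_range_succ', pow_zero, mul_comm, range_eq_Ico,
    prod_Ico_add' (fun k => s - ζ ^ k), zero_add, Ico_add_one_right_eq_Icc]

theorem prod_Icc_pow_eq_prod_pow_mul_inv_pow {G₀ M : Type*} [GroupWithZero G₀] [CommMonoid M]
    {ζ : G₀} {m : ℕ} (hζ : ζ ^ (2 * m + 1) = 1) (f : G₀ → M) :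
    ∏ k ∈ Icc 1 (2 * m), f (ζ ^ k) = ∏ j ∈ Icc 1 m, f (ζ ^ j) * f (ζ⁻¹ ^ j) := by
  have hζ0 : ζ ≠ 0 := by rintro rfl; simp at hζ
  have hIcc (n : ℕ) : Icc 1 n = Ioc 0 n := Icc_add_one_left_eq_Ioc 0 n
  rw [prod_mul_distrib, hIcc, hIcc, ← prod_Ioc_consecutive _ m.zero_le (by omega : m ≤ 2 * m)]
  congr 1
  refine prod_nbij' (fun k => 2 * m + 1 - k) (fun j => 2 * m + 1 - j) ?_ ?_ ?_ ?_ ?_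
  all_goals intro k hk; simp only [mem_Ioc] at hk ⊢
  any_goals omega
  rw [inv_pow, pow_sub₀ ζ hζ0 (by omega), hζ, one_mul, inv_inv]

section PeriodPoly

variable {K : Type*} [Field K]

/-- The polynomial `h` of the statement, whose roots are the periods `ζ^j + ζ^-j`. -/
noncomputable def periodPoly (ζ : K) (m : ℕ) : K[X] := ∏ j ∈ Icc 1 m, (X - C (ζ ^ j + ζ⁻¹ ^ j))

theorem eval_periodPoly (ζ : K) (m : ℕ) (z : K) :
    (periodPoly ζ m).eval z = ∏ j ∈ Icc 1 m, (z - (ζ ^ j + ζ⁻¹ ^ j)) := by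
  simp [periodPoly, eval_prod]

theorem IsPrimitiveRoot.sub_one_mul_pow_mul_eval_periodPoly {ζ : K} {m : ℕ}
    (hζ : IsPrimitiveRoot ζ (2 * m + 1)) {s : K} (hs : s ≠ 0) :
    (s - 1) * s ^ m * (periodPoly ζ m).eval (s + s⁻¹) = s ^ (2 * m + 1) - 1 := by
  have hζ0 : ζ ≠ 0 := hζ.ne_zero (by omega)
  have hfactor (j : ℕ) : (s - ζ ^ j) * (s - ζ⁻¹ ^ j) = s * (s + s⁻¹ - (ζ ^ j + ζ⁻¹ ^ j)) := by
    have hζj : ζ ^ j * ζ⁻¹ ^ j = 1 := by rw [← mul_pow, mul_inv_cancel₀ hζ0, one_pow]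
    linear_combination hζj - mul_inv_cancel₀ hs
  rw [← hζ.sub_one_mul_prod_Icc_sub_pow, prod_Icc_pow_eq_prod_pow_mul_inv_pow hζ.pow_eq_one
    (fun w => s - w), prod_congr rfl fun j _ => hfactor j, prod_mul_distrib, prod_const,
    Nat.card_Icc, Nat.add_sub_cancel, eval_periodPoly, mul_assoc]

theorem exists_ne_zero_add_inv_eq [IsAlgClosed K] (z : K) : ∃ t : K, t ≠ 0 ∧ t + t⁻¹ = z := by
  have hdeg : (X ^ 2 - C z * X + 1).degree = 2 := by compute_degree!
  obtain ⟨t, ht⟩ := IsAlgClosed.exists_root (X ^ 2 - C z * X + 1) (by rw [hdeg]; decide)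
  simp only [IsRoot, eval_add, eval_sub, eval_pow, eval_mul, eval_X, eval_C, eval_one] at ht
  have ht0 : t ≠ 0 := by rintro rfl; simp at ht
  exact ⟨t, ht0, by field_simp; linear_combination ht⟩

theorem sub_inv_ne_zero_of_add_inv_ne {t : K} (ht : t ≠ 0) (h2 : t + t⁻¹ ≠ 2)
    (hneg2 : t + t⁻¹ ≠ -2) : t - t⁻¹ ≠ 0 := by
  intro h
  have hsq : (t - 1) * (t + 1) = 0 := by field_simp at h; linear_combination h
  rcases mul_eq_zero.1 hsq with h1 | h1
  · exact h2 (by rw [sub_eq_zero.1 h1]; norm_num)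
  · exact hneg2 (by rw [eq_neg_of_add_eq_zero_left h1]; norm_num)

open Chebyshev in
theorem IsPrimitiveRoot.S_two_mul_eq_periodPoly [IsAlgClosed K] {ζ : K} {m : ℕ}
    (hζ : IsPrimitiveRoot ζ (2 * m + 1)) :
    S K (2 * m : ℕ) = C ((-1) ^ m) * periodPoly ζ m * (periodPoly ζ m).comp (-X) := by
  refine eq_of_infinite_eval_eq _ _
    (((Set.finite_singleton 2).insert (-2)).infinite_compl.mono fun z hz => ?_)
  simp only [Set.mem_compl_iff, Set.mem_insert_iff, Set.mem_singleton_iff, not_or] at hz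
  obtain ⟨t, ht0, rfl⟩ := exists_ne_zero_add_inv_eq z
  apply mul_left_cancel₀ (sub_inv_ne_zero_of_add_inv_ne ht0 hz.2 hz.1)
  rw [sub_mul_S_eval_add (mul_inv_cancel₀ ht0), eval_mul, eval_mul, eval_C, eval_comp, eval_neg,
    eval_X]
  set A := (periodPoly ζ m).eval (t + t⁻¹)
  set B := (periodPoly ζ m).eval (-(t + t⁻¹))
  have hA : (t - 1) * t ^ m * A = t ^ (2 * m + 1) - 1 :=
    hζ.sub_one_mul_pow_mul_eval_periodPoly ht0
  have hB : (-t - 1) * ((-1) ^ m * t ^ m) * B = -t ^ (2 * m + 1) - 1 := by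
    have h := hζ.sub_one_mul_pow_mul_eval_periodPoly (neg_ne_zero.2 ht0)
    rwa [inv_neg, ← neg_add, neg_pow t m, Odd.neg_pow (odd_two_mul_add_one m)] at h
  have hpow_inv : t ^ (2 * m + 1) * t⁻¹ ^ (2 * m + 1) = 1 := by
    rw [← mul_pow, mul_inv_cancel₀ ht0, one_pow]
  apply mul_left_cancel₀ (pow_ne_zero (2 * m + 1) ht0)
  linear_combination congrArg₂ (· * ·) hA hB + t ^ (2 * m) * ((-1) ^ m * A * B) *
    mul_inv_cancel₀ ht0 - hpow_inv

end PeriodPoly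

theorem chebyshev_derivative_and_U_factorization_general (r : ℕ) (hodd : Odd r)
    (ζ : ℂ) (hζ : IsPrimitiveRoot ζ r) :
    Polynomial.derivative (Polynomial.Chebyshev.T ℂ (r : ℤ)) =
        Polynomial.C (r : ℂ) * Polynomial.Chebyshev.U ℂ ((r : ℤ) - 1) ∧
      ∀ x : ℂ, Polynomial.eval (x / (2 * Complex.I)) (Polynomial.Chebyshev.U ℂ ((r : ℤ) - 1)) =
        Complex.I ^ (r - 1) *
          (∏ j ∈ Finset.Icc 1 ((r - 1) / 2), (Complex.I * x - (ζ ^ j + ζ⁻¹ ^ j))) *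
          (∏ j ∈ Finset.Icc 1 ((r - 1) / 2), (-Complex.I * x - (ζ ^ j + ζ⁻¹ ^ j))) := by
  refine ⟨by rw [Chebyshev.T_derivative_eq_U]; rfl, fun x => ?_⟩
  obtain ⟨m, rfl⟩ := hodd
  have hindex : ((2 * m + 1 : ℕ) : ℤ) - 1 = (2 * m : ℕ) := by push_cast; ring
  have hpoint : 2 * (x / (2 * I)) = -(I * x) := by field_simp; linear_combination x * I_sq
  rw [hindex, ← Chebyshev.S_comp_two_mul_X, eval_comp, eval_mul, eval_X, eval_ofNat, hpoint,
    hζ.S_two_mul_eq_periodPoly, eval_mul, eval_mul, eval_C, eval_comp, eval_neg, eval_X, neg_neg,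
    eval_periodPoly, eval_periodPoly, Nat.add_sub_cancel, Nat.mul_div_cancel_left m two_pos,
    pow_mul, I_sq, neg_mul]
  ring

/-- For an odd prime `r`, the derivative of the `r`-th Chebyshev polynomial of the first kind
satisfies `T_r' = r·U_{r-1}`, and `U_{r-1}(x/(2i)) = i^(r-1) h(ix) h(-ix)`, where `U_{r-1}` is
the `(r-1)`-st Chebyshev polynomial of the second kind, `i² = -1`, and
`h(x) = ∏_{j=1}^{(r-1)/2} (x - (ζ_r^j + ζ_r^{-j}))`. -/
theorem chebyshev_derivative_and_U_factorization (r : ℕ) (hr : r.Prime) (hodd : Odd r)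
    (ζ : ℂ) (hζ : IsPrimitiveRoot ζ r) :
    Polynomial.derivative (Polynomial.Chebyshev.T ℂ (r : ℤ)) =
        Polynomial.C (r : ℂ) * Polynomial.Chebyshev.U ℂ ((r : ℤ) - 1) ∧
      ∀ x : ℂ, Polynomial.eval (x / (2 * Complex.I)) (Polynomial.Chebyshev.U ℂ ((r : ℤ) - 1)) =
        Complex.I ^ (r - 1) *
          (∏ j ∈ Finset.Icc 1 ((r - 1) / 2), (Complex.I * x - (ζ ^ j + ζ⁻¹ ^ j))) *
          (∏ j ∈ Finset.Icc 1 ((r - 1) / 2), (-Complex.I * x - (ζ ^ j + ζ⁻¹ ^ j))) :=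
  chebyshev_derivative_and_U_factorization_general r hodd ζ hζ
end

section
/- For an odd prime r and all j = 0, 1, ..., (r-1)/2, one has H(i z ω_j, z) = 2 (iz)^r and H(-i z ω_j, z) = -2 (iz)^r, where ω_j = ζ_r^j + ζ_r^{-j} (so ω_0 = 2), i^2 = -1, and H(x,z) = z^{r-1} x h((x/z)^2 + 2). -/
open Polynomial Finset Complex

/-!
Put `r = 2m + 1` and `u = ζ^j`. Since `(i(u + u⁻¹))² + 2 = -(u² + u⁻²)`, the `k`-th factor of
`h` equals `-u⁻²(u² + ζ^k)(u² + ζ^{-k})`. Pairing `k` with `r - k`, the product of the second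
factors is `∏_{0<k<r} (u² + ζ^k)`, and `(u² + 1)` times it is `(u²)^r + 1 = 2` because
`X^r + 1 = ∏_{k<r} (X + ζ^k)` for odd `r`. As `u + u⁻¹ = u⁻¹(u² + 1)`, everything collapses to
`2 i (-1)^m z^r u^{-r} = 2 (iz)^r`. The value at `-x` is the one for the other square root `-i`
of `-1`, and `(-iz)^r = -(iz)^r`.
-/
theorem IsPrimitiveRoot.prod_range_add_pow_eq_pow_add_one {R : Type*} [CommRing R] [IsDomain R]
    {ζ : R} {n : ℕ} (hζ : IsPrimitiveRoot ζ n) (hn : Odd n) (w : R) :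
    ∏ i ∈ range n, (w + ζ ^ i) = w ^ n + 1 := by
  have h := congrArg (eval (-w)) (X_pow_sub_C_eq_prod hζ hn.pos (one_pow n))
  simp only [eval_sub, eval_pow, eval_X, eval_C, eval_prod, mul_one] at h
  rw [hn.neg_pow, show (fun i => -w - ζ ^ i) = fun i => -(w + ζ ^ i) by ext; ring,
    prod_neg, card_range, hn.neg_one_pow] at h
  linear_combination h

theorem prod_range_two_mul_add_one_eq_mul_prod_pow_inv_pow {G M : Type*} [DivisionMonoid G]
    [CommMonoid M] {ζ : G} {m : ℕ} (hζ : ζ ^ (2 * m + 1) = 1) (f : G → M) :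
    ∏ i ∈ range (2 * m + 1), f (ζ ^ i) = f 1 * ∏ k ∈ Icc 1 m, f (ζ ^ k) * f (ζ⁻¹ ^ k) := by
  have hreflect :
      ∏ k ∈ Ico (m + 1) (2 * m + 1), f (ζ ^ k) = ∏ k ∈ range m, f (ζ⁻¹ ^ (k + 1)) := by
    rw [prod_Ico_eq_prod_range, show 2 * m + 1 - (m + 1) = m by omega, ← prod_range_reflect]
    refine prod_congr rfl fun k hk => congrArg f ?_
    rw [inv_pow]
    refine (inv_eq_of_mul_eq_one_left ?_).symm
    rw [← pow_add, ← hζ]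
    congr 1
    have := mem_range.mp hk
    omega
  rw [← prod_range_mul_prod_Ico _ (by omega : m + 1 ≤ 2 * m + 1), hreflect, prod_range_succ',
    pow_zero, ← Ico_add_one_right_eq_Icc, prod_Ico_eq_prod_range, add_tsub_cancel_right,
    prod_mul_distrib]
  simp only [add_comm 1]
  ac_rfl

theorem sq_mul_add_inv_add_two_sub_add_inv {K : Type*} [Field K] {i u v : K} (hi : i ^ 2 = -1)
    (hu : u ≠ 0) (hv : v ≠ 0) :
    (i * (u + u⁻¹)) ^ 2 + 2 - (v + v⁻¹) = -u⁻¹ ^ 2 * ((u ^ 2 + v) * (u ^ 2 + v⁻¹)) := by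
  rw [mul_pow, hi]
  field_simp
  ring

theorem IsPrimitiveRoot.pow_mul_mul_prod_eq_two_mul_pow {K : Type*} [Field K] {ζ : K} {m : ℕ}
    (hζ : IsPrimitiveRoot ζ (2 * m + 1)) {u i z : K} (hu : u ^ (2 * m + 1) = 1)
    (hi : i ^ 2 = -1) (hz : z ≠ 0) :
    z ^ (2 * m) * (i * z * (u + u⁻¹)) *
        ∏ k ∈ Icc 1 m, ((i * z * (u + u⁻¹) / z) ^ 2 + 2 - (ζ ^ k + ζ⁻¹ ^ k)) =
      2 * (i * z) ^ (2 * m + 1) := by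
  have hu0 : u ≠ 0 := by rintro rfl; simp at hu
  have hζ0 : ζ ≠ 0 := hζ.ne_zero (by omega)
  set P := ∏ k ∈ Icc 1 m, ((u ^ 2 + ζ ^ k) * (u ^ 2 + ζ⁻¹ ^ k))
  have hP : (u ^ 2 + 1) * P = 2 := by
    have h := hζ.prod_range_add_pow_eq_pow_add_one ⟨m, rfl⟩ (u ^ 2)
    rw [prod_range_two_mul_add_one_eq_mul_prod_pow_inv_pow hζ.pow_eq_one, ← pow_mul, mul_comm 2,
      pow_mul, hu, one_pow] at h
    exact h.trans one_add_one_eq_two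
  have hfactor : ∀ k, (i * z * (u + u⁻¹) / z) ^ 2 + 2 - (ζ ^ k + ζ⁻¹ ^ k) =
      -u⁻¹ ^ 2 * ((u ^ 2 + ζ ^ k) * (u ^ 2 + ζ⁻¹ ^ k)) := fun k => by
    rw [mul_right_comm, mul_div_cancel_right₀ _ hz, inv_pow,
      sq_mul_add_inv_add_two_sub_add_inv hi hu0 (pow_ne_zero k hζ0)]
  have huinv : u⁻¹ ^ (2 * m) * u⁻¹ = 1 := by rw [← pow_succ, inv_pow, hu, inv_one]
  have hpow : (i * z) ^ (2 * m + 1) = (-1) ^ m * i * z ^ (2 * m) * z := by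
    rw [mul_pow, pow_succ, pow_mul, hi]
    ring
  rw [prod_congr rfl fun k _ => hfactor k, prod_mul_distrib, prod_const, Nat.card_Icc,
    add_tsub_cancel_right, neg_pow, ← pow_mul, hpow]
  linear_combination (z ^ (2 * m) * i * z * (-1) ^ m * (u ^ 2 + 1) * P) * huinv +
    (z ^ (2 * m) * i * z * (-1) ^ m) * hP -
    (z ^ (2 * m) * i * z * (-1) ^ m * u⁻¹ ^ (2 * m) * P * u) * mul_inv_cancel₀ hu0

theorem H_evaluation_at_omega_general (r : ℕ) (hodd : Odd r)
    (ζ : ℂ) (hζ : IsPrimitiveRoot ζ r) (z : ℂ) (hz : z ≠ 0)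
    (j : ℕ) :
    (z ^ (r - 1) * (Complex.I * z * (ζ ^ j + ζ⁻¹ ^ j)) *
        ∏ k ∈ Finset.Icc 1 ((r - 1) / 2),
          ((Complex.I * z * (ζ ^ j + ζ⁻¹ ^ j) / z) ^ 2 + 2 - (ζ ^ k + ζ⁻¹ ^ k)) =
      2 * (Complex.I * z) ^ r) ∧
    (z ^ (r - 1) * (-(Complex.I * z * (ζ ^ j + ζ⁻¹ ^ j))) *
        ∏ k ∈ Finset.Icc 1 ((r - 1) / 2),
          ((-(Complex.I * z * (ζ ^ j + ζ⁻¹ ^ j)) / z) ^ 2 + 2 - (ζ ^ k + ζ⁻¹ ^ k)) =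
      -(2 * (Complex.I * z) ^ r)) := by
  obtain ⟨m, rfl⟩ := hodd
  have hu : (ζ ^ j) ^ (2 * m + 1) = 1 := by
    rw [← pow_mul, mul_comm, pow_mul, hζ.pow_eq_one, one_pow]
  rw [inv_pow, add_tsub_cancel_right, Nat.mul_div_cancel_left m two_pos]
  refine ⟨hζ.pow_mul_mul_prod_eq_two_mul_pow hu I_sq hz, ?_⟩
  have h := hζ.pow_mul_mul_prod_eq_two_mul_pow hu (by rw [neg_sq, I_sq]) hz
  simpa only [neg_mul, Odd.neg_pow ⟨m, rfl⟩, mul_neg] using h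

/-- For an odd prime `r` and all `j = 0, 1, ..., (r-1)/2`, one has `H(izω_j, z) = 2(iz)^r` and
`H(-izω_j, z) = -2(iz)^r`, where `ω_j = ζ_r^j + ζ_r^{-j}`, `i² = -1`, and
`H(x,z) = z^(r-1) x h((x/z)² + 2)` with `h(x) = ∏_{j=1}^{(r-1)/2} (x - ω_j)`. -/
theorem H_evaluation_at_omega (r : ℕ) (hr : r.Prime) (hodd : Odd r)
    (ζ : ℂ) (hζ : IsPrimitiveRoot ζ r) (z : ℂ) (hz : z ≠ 0)
    (j : ℕ) (hj : j ≤ (r - 1) / 2) :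
    (z ^ (r - 1) * (Complex.I * z * (ζ ^ j + ζ⁻¹ ^ j)) *
        ∏ k ∈ Finset.Icc 1 ((r - 1) / 2),
          ((Complex.I * z * (ζ ^ j + ζ⁻¹ ^ j) / z) ^ 2 + 2 - (ζ ^ k + ζ⁻¹ ^ k)) =
      2 * (Complex.I * z) ^ r) ∧
    (z ^ (r - 1) * (-(Complex.I * z * (ζ ^ j + ζ⁻¹ ^ j))) *
        ∏ k ∈ Finset.Icc 1 ((r - 1) / 2),
          ((-(Complex.I * z * (ζ ^ j + ζ⁻¹ ^ j)) / z) ^ 2 + 2 - (ζ ^ k + ζ⁻¹ ^ k)) =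
      -(2 * (Complex.I * z) ^ r)) :=
  H_evaluation_at_omega_general r hodd ζ hζ z hz j
end

section
/- For an odd prime r, the discriminant of the polynomial f^-(x) = x·h(x^2+2) + s over Q(s) equals (-1)^{(r-1)/2} · r^r · (s^2+4)^{(r-1)/2}. -/
/-!
Write `r = 2m + 1`. Pairing `ζ^j` with `ζ^(-j)` in `X^r - 1 = ∏ₖ (X - ζ^k)` gives, for `w ≠ 0`,
`(w - w⁻¹) h((w - w⁻¹)² + 2) = w^r - w^(-r)`. So if `z^r - z^(-r) = -s`, the roots of `f⁻` are
`γᵢ = ζ^i z - (ζ^i z)⁻¹` for `i ∈ ℤ/r`, and `γᵢ - γⱼ = (ζ^i - ζ^j)(z + ζ^(-i-j) z⁻¹)`.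
Over ordered pairs `i ≠ j`, the first factors multiply to `∏ᵢ (X^r - 1)'(ζ^i) = r^r`. As `i ↦ 2i`
permutes `ℤ/r`, each value of `i + j` occurs `r - 1` times, so the second factors multiply to
`(∏ₖ (z + ζ^(-k) z⁻¹))^(r-1) = (z^r + z^(-r))^(r-1) = (s² + 4)^m`. This is nonzero because `s` is
transcendental, so the `γᵢ` are distinct; the discriminant is `(-1)^m` times this product.
-/

open Polynomial Finset Lagrange

theorem two_mul_add_one_mul_sub_one_div_two (k : ℕ) :
    (2 * k + 1) * (2 * k + 1 - 1) / 2 = (2 * k + 1) * k := by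
  rw [Nat.add_sub_cancel, mul_left_comm, Nat.mul_div_cancel_left _ two_pos]

section

variable {K : Type*} [Field K] {ζ : K} {n m : ℕ}

theorem prod_prod_erase_sub_eq_of_nodal_eq {ι : Type*} [Fintype ι] [DecidableEq ι]
    {x y : ι → K} (h : nodal univ x = nodal univ y) :
    ∏ i, ∏ j ∈ univ.erase i, (x i - x j) = ∏ i, ∏ j ∈ univ.erase i, (y i - y j) := by
  have eq_prod_roots (v : ι → K) : ∏ i, ∏ j ∈ univ.erase i, (v i - v j) =
      ((nodal univ v).roots.map fun a => (derivative (nodal univ v)).eval a).prod := by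
    rw [nodal_eq, roots_prod _ _ (by simpa [← nodal_eq] using nodal_ne_zero)]
    simp [← nodal_eq, eval_nodal_derivative_eval_node_eq, eval_nodal]
  rw [eq_prod_roots, eq_prod_roots, h]

theorem prod_filter_lt_sub_sq (x : Fin n → K) :
    ∏ i, ∏ j ∈ univ.filter (i < ·), (x i - x j) ^ 2 =
      (-1) ^ (n * (n - 1) / 2) * ∏ i, ∏ j ∈ univ.erase i, (x i - x j) := by
  have hcard : ∑ i : Fin n, #(Ioi i) = n * (n - 1) / 2 := by
    simp_rw [Fin.card_Ioi]
    rw [Fin.sum_univ_eq_sum_range (fun k => n - 1 - k), sum_range_reflect (fun k => k) n,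
      sum_range_id]
  have hoff : ∏ i, ∏ j ∈ univ.erase i, (x i - x j) =
      (-1) ^ (n * (n - 1) / 2) * ∏ i, ∏ j ∈ Ioi i, (x i - x j) ^ 2 := by
    simp_rw [← compl_singleton]
    rw [← prod_prod_Ioi_mul_eq_prod_prod_off_diag fun j i => x i - x j,
      ← hcard, ← prod_pow_eq_pow_sum, ← prod_mul_distrib]
    refine prod_congr rfl fun i _ => ?_
    rw [← prod_const, ← prod_mul_distrib]
    exact prod_congr rfl fun j _ => by ring
  simp_rw [filter_lt_eq_Ioi]
  rw [hoff, ← mul_assoc, ← pow_add, ← two_mul, pow_mul, neg_one_sq, one_pow, one_mul]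

theorem IsPrimitiveRoot.nodal_pow_mul (hζ : IsPrimitiveRoot ζ n) (hn : 0 < n) (α : K) :
    nodal univ (fun i : Fin n => ζ ^ (i : ℕ) * α) = X ^ n - C (α ^ n) := by
  rw [nodal_eq, X_pow_sub_C_eq_prod hζ hn rfl,
    Fin.prod_univ_eq_prod_range (fun i => X - C (ζ ^ i * α))]

theorem IsPrimitiveRoot.prod_sub_pow_mul (hζ : IsPrimitiveRoot ζ n) (hn : 0 < n) (x α : K) :
    ∏ i : Fin n, (x - ζ ^ (i : ℕ) * α) = x ^ n - α ^ n := by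
  simpa [eval_nodal] using congrArg (eval x) (hζ.nodal_pow_mul hn α)

theorem IsPrimitiveRoot.prod_prod_erase_pow_sub_pow (hζ : IsPrimitiveRoot ζ n) (hn : Odd n) :
    ∏ i : Fin n, ∏ j ∈ univ.erase i, (ζ ^ (i : ℕ) - ζ ^ (j : ℕ)) = (n : K) ^ n := by
  have hnodal : nodal univ (fun i : Fin n => ζ ^ (i : ℕ)) = X ^ n - 1 := by
    simpa using hζ.nodal_pow_mul hn.pos 1
  have hderiv (i : Fin n) :
      ∏ j ∈ univ.erase i, (ζ ^ (i : ℕ) - ζ ^ (j : ℕ)) = n * (ζ ^ (n - 1)) ^ (i : ℕ) := by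
    have h := eval_nodal_derivative_eval_node_eq (v := fun j : Fin n => ζ ^ (j : ℕ)) (mem_univ i)
    rw [hnodal, eval_nodal] at h
    simp [← h, derivative_X_pow, ← pow_mul, mul_comm]
  obtain ⟨k, rfl⟩ := hn
  rw [prod_congr rfl fun i _ => hderiv i, prod_mul_distrib, prod_const, card_univ,
    Fintype.card_fin, prod_pow_eq_pow_sum, Fin.sum_univ_eq_sum_range (·), sum_range_id,
    two_mul_add_one_mul_sub_one_div_two, ← pow_mul, mul_left_comm, pow_mul, hζ.pow_eq_one,
    one_pow, mul_one]

theorem IsPrimitiveRoot.sub_one_mul_prod_Icc (hζ : IsPrimitiveRoot ζ (2 * m + 1)) (y : K) :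
    (y - 1) * ∏ j ∈ Icc 1 m, ((y - ζ ^ j) * (y - ζ⁻¹ ^ j)) = y ^ (2 * m + 1) - 1 := by
  have hrange : y ^ (2 * m + 1) - 1 = ∏ k ∈ range (2 * m + 1), (y - ζ ^ k) := by
    simpa [Fin.prod_univ_eq_prod_range (fun k => y - ζ ^ k)] using
      (hζ.prod_sub_pow_mul (Nat.succ_pos _) y 1).symm
  have hreflect : ∏ k ∈ range m, (y - ζ ^ (m + 1 + (m - 1 - k))) =
      ∏ k ∈ range m, (y - ζ⁻¹ ^ (1 + k)) := by
    refine prod_congr rfl fun k hk => ?_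
    have hk : k < m := mem_range.1 hk
    rw [inv_pow, eq_inv_of_mul_eq_one_left (a := ζ ^ (m + 1 + (m - 1 - k))) (by
      rw [← pow_add, show m + 1 + (m - 1 - k) + (1 + k) = 2 * m + 1 by omega, hζ.pow_eq_one])]
  rw [hrange, show 2 * m + 1 = (m + 1) + m by ring, prod_range_add, prod_range_succ',
    ← prod_range_reflect (fun k => y - ζ ^ (m + 1 + k)), hreflect, ← Ico_add_one_right_eq_Icc,
    prod_Ico_eq_prod_range, Nat.add_sub_cancel, prod_mul_distrib]
  simp only [add_comm 1, pow_zero]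
  ring

theorem prod_prod_erase_add_eq_pow {G M : Type*} [AddCommGroup G] [Fintype G] [DecidableEq G]
    [CommMonoid M] (hG : Odd (Nat.card G)) (t : G → M) :
    ∏ i, ∏ j ∈ univ.erase i, t (i + j) = (∏ k, t k) ^ (Nat.card G - 1) := by
  have hshift (i : G) : ∏ j ∈ univ.erase i, t (i + j) = ∏ k ∈ univ.erase (i + i), t k :=
    prod_equiv (Equiv.addLeft i) (by simp) (by simp)
  have hdouble : Function.Bijective fun i : G => i + i := by
    simpa only [two_nsmul] using (Nat.coprime_two_right.mpr hG).nsmul_right_bijective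
  calc ∏ i, ∏ j ∈ univ.erase i, t (i + j) = ∏ i, ∏ k ∈ univ.erase i, t k := by
        simp_rw [hshift]; exact hdouble.prod_comp fun i => ∏ k ∈ univ.erase i, t k
    _ = ∏ k, ∏ i ∈ univ.erase k, t k := prod_comm' (by simp [ne_comm])
    _ = (∏ k, t k) ^ (Nat.card G - 1) := by simp [prod_pow, Nat.card_eq_fintype_card]

theorem sub_inv_sub_sub_inv {a b z : K} (ha : a ≠ 0) (hb : b ≠ 0) (hz : z ≠ 0) :
    (a * z - (a * z)⁻¹) - (b * z - (b * z)⁻¹) = (a - b) * (z + (a * b)⁻¹ * z⁻¹) := by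
  field_simp
  ring

theorem injective_of_prod_prod_erase_sub_ne_zero {ι : Type*} [Fintype ι] [DecidableEq ι]
    {x : ι → K} (h : ∏ i, ∏ j ∈ univ.erase i, (x i - x j) ≠ 0) : Function.Injective x := by
  intro i j hij
  by_contra hne
  exact h (prod_eq_zero (mem_univ i) (prod_eq_zero (mem_erase.2 ⟨Ne.symm hne, mem_univ j⟩)
    (sub_eq_zero.2 hij)))

theorem exists_pow_sub_inv_pow_eq [IsAlgClosed K] (hn : 0 < n) (a : K) :
    ∃ z : K, z ≠ 0 ∧ z ^ n - (z ^ n)⁻¹ = a := by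
  obtain ⟨v, hv⟩ := IsAlgClosed.exists_root (X ^ 2 - C a * X - 1 : K[X]) (by
    rw [show (X ^ 2 - C a * X - 1 : K[X]) = C 1 * X ^ 2 + C (-a) * X + C (-1) by simp; ring,
      degree_quadratic one_ne_zero]
    decide)
  simp only [IsRoot, eval_sub, eval_pow, eval_X, eval_mul, eval_C, eval_one] at hv
  have hv0 : v ≠ 0 := by rintro rfl; simp at hv
  obtain ⟨z, rfl⟩ := IsAlgClosed.exists_pow_nat_eq v hn
  refine ⟨z, fun hz => hv0 (by rw [hz, zero_pow hn.ne']), ?_⟩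
  field_simp
  linear_combination hv

def subInvOrbit (ζ z : K) (n : ℕ) (i : Fin n) : K :=
  ζ ^ (i : ℕ) * z - (ζ ^ (i : ℕ) * z)⁻¹

theorem IsPrimitiveRoot.prod_prod_erase_subInvOrbit (hζ : IsPrimitiveRoot ζ n) (hn : Odd n)
    {z : K} (hz : z ≠ 0) :
    ∏ i, ∏ j ∈ univ.erase i, (subInvOrbit ζ z n i - subInvOrbit ζ z n j) =
      n ^ n * (z ^ n + (z ^ n)⁻¹) ^ (n - 1) := by
  have : NeZero n := ⟨hn.pos.ne'⟩
  have hζ0 : ζ ≠ 0 := hζ.ne_zero hn.pos.ne'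
  have hmod (a : ℕ) : ζ⁻¹ ^ (a % n) = ζ⁻¹ ^ a := by rw [hζ.inv.eq_orderOf, pow_mod_orderOf]
  set t : Fin n → K := fun k => z + ζ⁻¹ ^ (k : ℕ) * z⁻¹
  have hdiff (i j : Fin n) :
      subInvOrbit ζ z n i - subInvOrbit ζ z n j = (ζ ^ (i : ℕ) - ζ ^ (j : ℕ)) * t (i + j) := by
    have hpow : ζ⁻¹ ^ ((i + j : Fin n) : ℕ) = (ζ ^ (i : ℕ) * ζ ^ (j : ℕ))⁻¹ := by
      rw [Fin.val_add, hmod, inv_pow, pow_add]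
    rw [subInvOrbit, subInvOrbit, sub_inv_sub_sub_inv (pow_ne_zero _ hζ0) (pow_ne_zero _ hζ0) hz]
    simp only [t, hpow]
  have ht : ∏ k, t k = z ^ n + (z ^ n)⁻¹ := by
    simpa [t, hn.neg_pow, inv_pow] using hζ.inv.prod_sub_pow_mul hn.pos z (-z⁻¹)
  simp_rw [hdiff, prod_mul_distrib, hζ.prod_prod_erase_pow_sub_pow hn,
    prod_prod_erase_add_eq_pow (by simpa using hn) t, ht, Nat.card_eq_fintype_card,
    Fintype.card_fin]

noncomputable def fMinus (ζ s : K) (m : ℕ) : K[X] :=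
  X * (∏ j ∈ Icc 1 m, (X - C (ζ ^ j + ζ⁻¹ ^ j))).comp (X ^ 2 + C 2) + C s

theorem monic_fMinus_and_natDegree (ζ s : K) (m : ℕ) :
    (fMinus ζ s m).Monic ∧ (fMinus ζ s m).natDegree = 2 * m + 1 := by
  have hH : (∏ j ∈ Icc 1 m, (X - C (ζ ^ j + ζ⁻¹ ^ j))).Monic :=
    monic_prod_of_monic _ _ fun j _ => monic_X_sub_C _
  have hcomp := hH.comp (monic_X_pow_add_C (2 : K) two_ne_zero)
    (by rw [natDegree_X_pow_add_C]; omega)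
  have hdeg : (X * (∏ j ∈ Icc 1 m, (X - C (ζ ^ j + ζ⁻¹ ^ j))).comp (X ^ 2 + C 2)).natDegree =
      2 * m + 1 := by
    rw [natDegree_mul X_ne_zero hcomp.ne_zero, natDegree_comp, natDegree_X_pow_add_C,
      natDegree_prod_of_monic _ _ fun j _ => monic_X_sub_C _]
    simp only [natDegree_X, natDegree_X_sub_C, sum_const, Nat.card_Icc, smul_eq_mul, mul_one]
    omega
  refine ⟨(monic_X.mul hcomp).add_of_left ?_, by rw [fMinus, natDegree_add_C, hdeg]⟩
  rw [degree_eq_natDegree (monic_X.mul hcomp).ne_zero, hdeg]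
  exact degree_C_le.trans_lt (by exact_mod_cast Nat.succ_pos _)

theorem eval_fMinus_sub_inv (hζ : IsPrimitiveRoot ζ (2 * m + 1)) (s : K) {w : K} (hw : w ≠ 0) :
    (fMinus ζ s m).eval (w - w⁻¹) = w ^ (2 * m + 1) - (w ^ (2 * m + 1))⁻¹ + s := by
  have hζ0 : ζ ≠ 0 := hζ.ne_zero (Nat.succ_ne_zero _)
  have hfactor (j : ℕ) : (w - w⁻¹) ^ 2 + 2 - (ζ ^ j + ζ⁻¹ ^ j) =
      (w ^ 2)⁻¹ * ((w ^ 2 - ζ ^ j) * (w ^ 2 - ζ⁻¹ ^ j)) := by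
    have := pow_ne_zero j hζ0
    rw [inv_pow]
    field_simp
    ring
  simp only [fMinus, eval_add, eval_mul, eval_X, eval_comp, eval_prod, eval_sub, eval_pow,
    eval_C, add_left_inj]
  rw [prod_congr rfl fun j _ => hfactor j, prod_mul_distrib, prod_const, Nat.card_Icc,
    add_tsub_cancel_right]
  calc (w - w⁻¹) * ((w ^ 2)⁻¹ ^ m * ∏ j ∈ Icc 1 m, ((w ^ 2 - ζ ^ j) * (w ^ 2 - ζ⁻¹ ^ j)))
      = (w ^ (2 * m + 1))⁻¹ * ((w ^ 2 - 1) *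
          ∏ j ∈ Icc 1 m, ((w ^ 2 - ζ ^ j) * (w ^ 2 - ζ⁻¹ ^ j))) := by
        rw [pow_succ w (2 * m), pow_mul, inv_pow]
        field_simp
    _ = w ^ (2 * m + 1) - (w ^ (2 * m + 1))⁻¹ := by
        rw [hζ.sub_one_mul_prod_Icc]
        field_simp
        ring

theorem fMinus_eq_nodal_subInvOrbit (hζ : IsPrimitiveRoot ζ (2 * m + 1)) {s z : K} (hz : z ≠ 0)
    (hzs : z ^ (2 * m + 1) - (z ^ (2 * m + 1))⁻¹ = -s)
    (hinj : Function.Injective (subInvOrbit ζ z (2 * m + 1))) :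
    fMinus ζ s m = nodal univ (subInvOrbit ζ z (2 * m + 1)) := by
  obtain ⟨hmonic, hdeg⟩ := monic_fMinus_and_natDegree ζ s m
  have hdeg' : (fMinus ζ s m).degree = (2 * m + 1 : ℕ) := by
    rw [degree_eq_natDegree hmonic.ne_zero, hdeg]
  refine eq_of_degree_le_of_eval_index_eq (s := univ) hinj.injOn (by simp [hdeg'])
    (by rw [hdeg', degree_nodal, card_univ, Fintype.card_fin])
    (by rw [hmonic.leadingCoeff, nodal_monic.leadingCoeff]) fun i _ => ?_
  have hw : (ζ ^ (i : ℕ) * z) ^ (2 * m + 1) = z ^ (2 * m + 1) := by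
    rw [mul_pow, ← pow_mul, mul_comm (i : ℕ), pow_mul, hζ.pow_eq_one, one_pow, one_mul]
  rw [eval_nodal_at_node (mem_univ i), subInvOrbit, eval_fMinus_sub_inv hζ s
    (mul_ne_zero (pow_ne_zero _ (hζ.ne_zero (Nat.succ_ne_zero _))) hz), hw, hzs, neg_add_cancel]

end

theorem algebraMap_X_sq_add_four_ne_zero (K : Type*) [Field K] [Algebra (RatFunc ℚ) K] :
    algebraMap (RatFunc ℚ) K RatFunc.X ^ 2 + 4 ≠ 0 := by
  rw [← map_pow, ← map_ofNat (algebraMap (RatFunc ℚ) K) 4, ← map_add, _root_.map_ne_zero]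
  intro h
  exact RatFunc.transcendental_X
    ⟨(X ^ 2 + C 4 : ℚ[X]), X_pow_add_C_ne_zero two_pos _, by simpa using h⟩

theorem discriminant_fminus_general (r : ℕ) (hodd : Odd r)
    (K : Type*) [Field K] [Algebra (RatFunc ℚ) K] [IsAlgClosure (RatFunc ℚ) K]
    (ζ : K) (hζ : IsPrimitiveRoot ζ r)
    (s : K) (hs : s = algebraMap (RatFunc ℚ) K RatFunc.X)
    (β : Fin r → K)
    (hroots : Polynomial.X *
        ((∏ j ∈ Finset.Icc 1 ((r - 1) / 2),
            (Polynomial.X - Polynomial.C (ζ ^ j + ζ⁻¹ ^ j))).comp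
          (Polynomial.X ^ 2 + Polynomial.C 2)) + Polynomial.C s =
        ∏ i : Fin r, (Polynomial.X - Polynomial.C (β i))) :
    (∏ i : Fin r, ∏ j ∈ Finset.univ.filter (fun j : Fin r => i < j), (β i - β j) ^ 2) =
      (-1 : K) ^ ((r - 1) / 2) * (r : K) ^ r * (s ^ 2 + 4) ^ ((r - 1) / 2) := by
  have : IsAlgClosed K := IsAlgClosure.isAlgClosed (RatFunc ℚ)
  have : CharZero K := charZero_of_injective_algebraMap (algebraMap (RatFunc ℚ) K).injective
  obtain ⟨m, rfl⟩ := hodd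
  rw [show (2 * m + 1 - 1) / 2 = m by omega] at hroots ⊢
  obtain ⟨z, hz, hzs⟩ := exists_pow_sub_inv_pow_eq (by positivity : 0 < 2 * m + 1) (-s)
  have hsq : (z ^ (2 * m + 1) + (z ^ (2 * m + 1))⁻¹) ^ 2 = s ^ 2 + 4 := by
    linear_combination (z ^ (2 * m + 1) - (z ^ (2 * m + 1))⁻¹ - s) * hzs +
      4 * mul_inv_cancel₀ (pow_ne_zero (2 * m + 1) hz)
  have hdisc := hζ.prod_prod_erase_subInvOrbit ⟨m, rfl⟩ hz
  rw [Nat.add_sub_cancel, pow_mul, hsq] at hdisc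
  have hβ : nodal univ β = nodal univ (subInvOrbit ζ z (2 * m + 1)) := by
    rw [nodal_eq, ← hroots]
    refine fMinus_eq_nodal_subInvOrbit hζ hz hzs (injective_of_prod_prod_erase_sub_ne_zero ?_)
    rw [hdisc, hs]
    exact mul_ne_zero (pow_ne_zero _ (Nat.cast_ne_zero.2 (Nat.succ_ne_zero _)))
      (pow_ne_zero _ (algebraMap_X_sq_add_four_ne_zero K))
  rw [prod_filter_lt_sub_sq, prod_prod_erase_sub_eq_of_nodal_eq hβ, hdisc,
    two_mul_add_one_mul_sub_one_div_two, pow_mul, Odd.neg_one_pow ⟨m, rfl⟩]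
  push_cast
  ring

/-- For an odd prime `r`, the discriminant of `f⁻(x) = x·h(x²+2) + s` over `ℚ(s)` equals
`(-1)^((r-1)/2) · r^r · (s²+4)^((r-1)/2)`.  The discriminant of the monic degree-`r`
polynomial `f⁻` with roots `β i` is `∏_{i<j} (β i - β j)²`, computed in an algebraic
closure `K` of `ℚ(s)`. -/
theorem discriminant_fminus (r : ℕ) (hr : r.Prime) (hodd : Odd r)
    (K : Type*) [Field K] [Algebra (RatFunc ℚ) K] [IsAlgClosure (RatFunc ℚ) K]
    (ζ : K) (hζ : IsPrimitiveRoot ζ r)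
    (s : K) (hs : s = algebraMap (RatFunc ℚ) K RatFunc.X)
    (β : Fin r → K)
    (hroots : Polynomial.X *
        ((∏ j ∈ Finset.Icc 1 ((r - 1) / 2),
            (Polynomial.X - Polynomial.C (ζ ^ j + ζ⁻¹ ^ j))).comp
          (Polynomial.X ^ 2 + Polynomial.C 2)) + Polynomial.C s =
        ∏ i : Fin r, (Polynomial.X - Polynomial.C (β i))) :
    (∏ i : Fin r, ∏ j ∈ Finset.univ.filter (fun j : Fin r => i < j), (β i - β j) ^ 2) =
      (-1 : K) ^ ((r - 1) / 2) * (r : K) ^ r * (s ^ 2 + 4) ^ ((r - 1) / 2) :=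
  discriminant_fminus_general r hodd K ζ hζ s hs β hroots
end

section
/- Let r be an odd prime and a, b integers with r dividing a + b. Then φ_r(a,b) := (a^r + b^r)/(a+b) satisfies φ_r(a,b) ≡ r·a^{r-1} (mod r^2). -/
open Finset

theorem phi_r_congruence_general (r : ℕ) (hodd : Odd r)
    (a b : ℤ) (hdvd : (r : ℤ) ∣ a + b) :
    (∑ k ∈ Finset.range r, (-1 : ℤ) ^ k * a ^ (r - 1 - k) * b ^ k) ≡
      (r : ℤ) * a ^ (r - 1) [ZMOD ((r : ℤ) ^ 2)] := by
  obtain ⟨c, hc⟩ := hdvd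
  -- Since `-b = a + r (-c)`, `φ_r(a, b)` is a two-variable geometric sum in `x ≡ a (mod r)` and `a`.
  have hφ : ∑ k ∈ range r, (-1 : ℤ) ^ k * a ^ (r - 1 - k) * b ^ k =
      ∑ k ∈ range r, (a + r * -c) ^ k * a ^ (r - 1 - k) := by
    refine sum_congr rfl fun k _ => ?_
    rw [show a + r * -c = -b by linarith, neg_pow]
    ring
  rw [hφ, Int.modEq_comm, Int.modEq_iff_dvd]
  exact odd_sq_dvd_geom_sum₂_sub a (-c) hodd

/-- Let `r` be an odd prime and `a, b` integers with `r ∣ a + b`. Then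
`φ_r(a,b) = ∑_{k=0}^{r-1} (-1)^k a^(r-1-k) b^k` satisfies
`φ_r(a,b) ≡ r·a^(r-1) (mod r²)`. -/
theorem phi_r_congruence (r : ℕ) (hr : r.Prime) (hodd : Odd r)
    (a b : ℤ) (hdvd : (r : ℤ) ∣ a + b) :
    (∑ k ∈ Finset.range r, (-1 : ℤ) ^ k * a ^ (r - 1 - k) * b ^ k) ≡
      (r : ℤ) * a ^ (r - 1) [ZMOD ((r : ℤ) ^ 2)] :=
  phi_r_congruence_general r hodd a b hdvd
end

section
/- For an odd prime r, the binomial coefficient C((3r-1)/2, (r+1)/2) is congruent to 2r modulo r^2. -/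
/-- For an odd prime `r`, the binomial coefficient `C((3r-1)/2, (r+1)/2)` is congruent to
`2r` modulo `r²`. -/
theorem central_binomial_congruence (r : ℕ) (hr : r.Prime) (hodd : Odd r) :
    Nat.choose ((3 * r - 1) / 2) ((r + 1) / 2) ≡ 2 * r [MOD r ^ 2] := by
  obtain ⟨k, hk⟩ := hodd
  have hne2 : r ≠ 2 := by rintro rfl; omega
  have hr3 : 3 ≤ r := by have := hr.two_le; omega
  have hkpos : 1 ≤ k := by omega
  subst hk
  have h1 : (3 * (2 * k + 1) - 1) / 2 = 3 * k + 1 := by omega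
  have h2 : (2 * k + 1 + 1) / 2 = k + 1 := by omega
  rw [h1, h2, sq]
  -- Key identity
  have hid : Nat.choose (3 * k + 1) (k + 1) * (k + 1) =
      Nat.choose (3 * k + 1) k * (2 * k + 1) := by
    have := Nat.choose_succ_right_eq (3 * k + 1) k
    rw [this]; congr 1; omega
  -- Lucas: C(3k+1, k) ≡ 1 [MOD 2k+1]
  have hfact : Fact (2 * k + 1).Prime := ⟨hr⟩
  have hlucas : Nat.choose (3 * k + 1) k ≡ 1 [MOD 2 * k + 1] := by
    have := Choose.choose_modEq_choose_mod_mul_choose_div_nat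
      (n := 3 * k + 1) (k := k) (p := 2 * k + 1)
    have e1 : (3 * k + 1) % (2 * k + 1) = k := by
      rw [Nat.mod_eq_sub_mod (by omega)]
      have : 3 * k + 1 - (2 * k + 1) = k := by omega
      rw [this, Nat.mod_eq_of_lt (by omega)]
    have e2 : (3 * k + 1) / (2 * k + 1) = 1 :=
      Nat.div_eq_of_lt_le (by omega) (by omega)
    have e3 : k % (2 * k + 1) = k := Nat.mod_eq_of_lt (by omega)
    have e4 : k / (2 * k + 1) = 0 := Nat.div_eq_of_lt (by omega)
    rw [e1, e2, e3, e4] at this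
    simpa using this
  -- so C(3k+1,k) = (2k+1)*t + 1 for some t
  obtain ⟨t, ht⟩ : ∃ t, Nat.choose (3 * k + 1) k = (2 * k + 1) * t + 1 := by
    have hge : 1 ≤ Nat.choose (3 * k + 1) k := Nat.choose_pos (by omega)
    obtain ⟨t, ht⟩ := (Nat.modEq_iff_dvd' hge).mp hlucas.symm
    exact ⟨t, by omega⟩
  -- 2k+1 divides C(3k+1, k+1)
  have hrdvd : (2 * k + 1) ∣ Nat.choose (3 * k + 1) (k + 1) := by
    have hdvd : (2 * k + 1) ∣ Nat.choose (3 * k + 1) (k + 1) * (k + 1) := by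
      rw [hid]; exact dvd_mul_left _ _
    rcases (Nat.Prime.dvd_mul hr).mp hdvd with h | h
    · exact h
    · exfalso; have := Nat.le_of_dvd (by omega) h; omega
  obtain ⟨s, hs⟩ := hrdvd
  have hs1 : s * (k + 1) = (2 * k + 1) * t + 1 := by
    rw [hs, ht] at hid
    nlinarith [hid]
  -- hence s ≡ 2 [MOD 2k+1]
  have hs2 : s ≡ 2 [MOD 2 * k + 1] := by
    have e : s + s * (2 * k + 1) = 2 + 2 * (2 * k + 1) * t := by nlinarith [hs1]
    have hA : s + s * (2 * k + 1) ≡ s + 0 [MOD 2 * k + 1] :=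
      Nat.ModEq.add_left s (Nat.modEq_zero_iff_dvd.mpr ⟨s, mul_comm s _⟩)
    have hB : 2 + 2 * (2 * k + 1) * t ≡ 2 + 0 [MOD 2 * k + 1] :=
      Nat.ModEq.add_left 2 (Nat.modEq_zero_iff_dvd.mpr ⟨2 * t, by ring⟩)
    calc s = s + 0 := by ring
      _ ≡ s + s * (2 * k + 1) [MOD 2 * k + 1] := hA.symm
      _ = 2 + 2 * (2 * k + 1) * t := e
      _ ≡ 2 + 0 [MOD 2 * k + 1] := hB
      _ = 2 := by ring
  calc Nat.choose (3 * k + 1) (k + 1) = (2 * k + 1) * s := hs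
    _ ≡ (2 * k + 1) * 2 [MOD (2 * k + 1) * (2 * k + 1)] := hs2.mul_left' _
    _ = 2 * (2 * k + 1) := by ring
end

section
/- Let C : y^2 + Q(x)y = P(x) and D : z^2 + T(u)z = S(u) be two odd-degree hyperelliptic equations of genus g over a field K of characteristic not 2 defining isomorphic curves, related by x = e^2 u + r, y = e^{2g+1} z + t(u) with e ∈ K*, r ∈ K, t ∈ K[u] of degree ≤ g. Then their discriminants satisfy Δ_D = Δ_C · e^{-4g(2g+1)}. -/
/-!
Completing the square, `y² + Qy - P = (y + Q/2)² - (P + Q²/4)`, shows that the change of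
variables multiplies `P + Q²/4` by `e^(2(2g+1))` after the substitution `x = e²u + c`. Hence the
roots of `S + T²/4` are the images `(β i - c)/e²` of those of `P + Q²/4`, up to reordering, and
the discriminant `∏_{i<j} (β i - β j)²` is homogeneous of degree `(2g+1)·2g` in the roots and
invariant under translation and permutation.
-/

open Polynomial Finset

theorem Fintype.exists_perm_eq_comp_of_map_univ_eq {ι β : Type*} [Fintype ι] [DecidableEq β]
    {f g : ι → β} (h : univ.val.map f = univ.val.map g) : ∃ σ : Equiv.Perm ι, f = g ∘ σ := by
  have hfiber (b : β) : Fintype.card {i // f i = b} = Fintype.card {i // g i = b} := by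
    simpa [Multiset.count_map, Fintype.card_subtype, card_def, eq_comm] using
      congrArg (Multiset.count b) h
  refine ⟨Equiv.ofFiberEquiv fun b => Fintype.equivOfCardEq (hfiber b), funext fun i => ?_⟩
  exact (Equiv.ofFiberEquiv_map _ i).symm

theorem roots_prod_X_sub_C_eq_map_univ {R ι : Type*} [CommRing R] [IsDomain R] [Fintype ι]
    (x : ι → R) : (∏ i, (X - C (x i))).roots = univ.val.map x := by
  rw [prod_eq_multiset_prod, show (fun i => X - C (x i)) = (fun a => X - C a) ∘ x from rfl,
    ← Multiset.map_map, roots_multiset_prod_X_sub_C]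

def rootDiscr {R : Type*} [CommRing R] {n : ℕ} (x : Fin n → R) : R :=
  ∏ i, ∏ j ∈ univ.filter (fun j => i < j), (x i - x j) ^ 2

section rootDiscr

variable {R : Type*} [CommRing R] {n : ℕ}

theorem rootDiscr_eq_det_vandermonde_sq (x : Fin n → R) :
    rootDiscr x = (Matrix.vandermonde x).det ^ 2 := by
  rw [Matrix.det_vandermonde, ← prod_pow]
  refine prod_congr rfl fun i _ => ?_
  rw [← prod_pow, filter_lt_eq_Ioi]
  exact prod_congr rfl fun j _ => by ring

theorem rootDiscr_comp_perm (x : Fin n → R) (σ : Equiv.Perm (Fin n)) :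
    rootDiscr (x ∘ σ) = rootDiscr x := by
  have hsign : ((Equiv.Perm.sign σ : ℤ) : R) ^ 2 = 1 := by
    rcases Int.units_eq_one_or (Equiv.Perm.sign σ) with h | h <;> simp [h]
  have hsub : Matrix.vandermonde (x ∘ σ) = (Matrix.vandermonde x).submatrix σ id := rfl
  rw [rootDiscr_eq_det_vandermonde_sq, rootDiscr_eq_det_vandermonde_sq, hsub,
    Matrix.det_permute, mul_pow, hsign, one_mul]

theorem rootDiscr_affine (x : Fin n → R) (a b : R) :
    rootDiscr (fun i => a * x i + b) = (a ^ 2) ^ n.choose 2 * rootDiscr x := by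
  have hpairs : ∑ i : Fin n, #(univ.filter (fun j => i < j)) = n.choose 2 := by
    have h := Fintype.card_product_filter_lt (α := Fin n)
    rw [Fintype.card_fin] at h
    rw [← h, card_filter, Fintype.sum_prod_type]
    simp only [card_filter]
  simp only [rootDiscr, show ∀ i j, (a * x i + b - (a * x j + b)) ^ 2 = a ^ 2 * (x i - x j) ^ 2
    from fun i j => by ring, prod_mul_distrib, prod_const, prod_pow_eq_pow_sum, hpairs]

theorem rootDiscr_eq_of_prod_X_sub_C_eq [IsDomain R] {x y : Fin n → R}
    (h : ∏ i, (X - C (x i)) = ∏ i, (X - C (y i))) : rootDiscr x = rootDiscr y := by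
  classical
  have hroots : univ.val.map x = univ.val.map y := by
    rw [← roots_prod_X_sub_C_eq_map_univ, ← roots_prod_X_sub_C_eq_map_univ, h]
  obtain ⟨σ, rfl⟩ := Fintype.exists_perm_eq_comp_of_map_univ_eq hroots
  exact rootDiscr_comp_perm y σ

end rootDiscr

theorem add_sq_mul_inv_four_eq_of_substitution {K : Type*} [Field K] (h2 : (2 : K) ≠ 0)
    {P Q S T t : K[X]} {l : K} (hQ : Q + 2 * t = C l * T)
    (hP : P - t ^ 2 - Q * t = C (l ^ 2) * S) :
    P + Q ^ 2 * C 4⁻¹ = C (l ^ 2) * (S + T ^ 2 * C 4⁻¹) := by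
  have h4 : C (4⁻¹ : K) * 4 = 1 := by
    have : (4 : K) ≠ 0 := by simpa [show (4 : K) = 2 * 2 by norm_num] using mul_ne_zero h2 h2
    rw [← C_ofNat, ← C_mul, inv_mul_cancel₀ this, C_1]
  linear_combination hP + C 4⁻¹ * (Q + 2 * t + C l * T) * hQ - (t ^ 2 + Q * t) * h4
    - C 4⁻¹ * T ^ 2 * (C_pow (a := l) (n := 2))

theorem prod_X_sub_C_comp_affine {L ι : Type*} [Field L] [Fintype ι] (x : ι → L) {a : L}
    (ha : a ≠ 0) (b : L) :
    (∏ i, (X - C (x i))).comp (C a * X + C b) =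
      C (a ^ Fintype.card ι) * ∏ i, (X - C ((x i - b) / a)) := by
  have hfactor (i : ι) : (X - C (x i)).comp (C a * X + C b) = C a * (X - C ((x i - b) / a)) := by
    rw [sub_comp, X_comp, C_comp, mul_sub, ← C_mul, mul_div_cancel₀ _ ha, C_sub]
    ring
  simp only [Polynomial.prod_comp, hfactor, prod_mul_distrib, prod_const, C_pow, card_univ]

theorem hyperelliptic_discriminant_transformation_general (K : Type*) [Field K] (h2 : (2 : K) ≠ 0)
    (g : ℕ)
    (P Q S T t : K[X]) (e c : K) (he : e ≠ 0)
    (hrel1 : Q.comp (Polynomial.C (e ^ 2) * Polynomial.X + Polynomial.C c) + 2 * t =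
      Polynomial.C (e ^ (2 * g + 1)) * T)
    (hrel2 : P.comp (Polynomial.C (e ^ 2) * Polynomial.X + Polynomial.C c) - t ^ 2 -
        Q.comp (Polynomial.C (e ^ 2) * Polynomial.X + Polynomial.C c) * t =
      Polynomial.C (e ^ (2 * (2 * g + 1))) * S)
    (L : Type*) [Field L] [Algebra K L]
    (β γ : Fin (2 * g + 1) → L)
    (hβ : (P + Q ^ 2 * Polynomial.C ((4 : K)⁻¹)).map (algebraMap K L) =
      ∏ i : Fin (2 * g + 1), (Polynomial.X - Polynomial.C (β i)))
    (hγ : (S + T ^ 2 * Polynomial.C ((4 : K)⁻¹)).map (algebraMap K L) =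
      ∏ i : Fin (2 * g + 1), (Polynomial.X - Polynomial.C (γ i))) :
    (2 : L) ^ (4 * g) *
        ∏ i : Fin (2 * g + 1), ∏ j ∈ Finset.univ.filter (fun j => i < j), (γ i - γ j) ^ 2 =
      ((2 : L) ^ (4 * g) *
          ∏ i : Fin (2 * g + 1), ∏ j ∈ Finset.univ.filter (fun j => i < j), (β i - β j) ^ 2) *
        (algebraMap K L e ^ (4 * g * (2 * g + 1)))⁻¹ := by
  set ε := algebraMap K L e
  have hε : ε ≠ 0 := (_root_.map_ne_zero _).mpr he
  have hsq : (P + Q ^ 2 * C 4⁻¹).comp (C (e ^ 2) * X + C c) =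
      C (e ^ (2 * (2 * g + 1))) * (S + T ^ 2 * C 4⁻¹) := by
    rw [add_comp, mul_comp, pow_comp, C_comp, pow_mul']
    exact add_sq_mul_inv_four_eq_of_substitution h2 hrel1 (by rwa [← pow_mul'])
  have hγβ : ∏ i, (X - C (γ i)) = ∏ i, (X - C ((β i - algebraMap K L c) / ε ^ 2)) := by
    have := congrArg (map (algebraMap K L)) hsq
    simp only [map_comp, hβ, Polynomial.map_mul, hγ, Polynomial.map_add, map_C, map_X,
      map_pow (algebraMap K L)] at this
    rw [prod_X_sub_C_comp_affine β (pow_ne_zero 2 hε), Fintype.card_fin, ← pow_mul] at this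
    exact (mul_left_cancel₀ (C_ne_zero.mpr (pow_ne_zero _ hε)) this).symm
  have hβ_affine : (fun i => (β i - algebraMap K L c) / ε ^ 2) =
      fun i => (ε ^ 2)⁻¹ * β i + -(algebraMap K L c / ε ^ 2) := by
    funext i; ring
  have hchoose : (2 * g + 1).choose 2 = g * (2 * g + 1) := by
    rw [Nat.choose_two_right, show (2 * g + 1) * (2 * g + 1 - 1) = 2 * (g * (2 * g + 1)) by
      rw [Nat.add_sub_cancel]; ring, Nat.mul_div_cancel_left _ two_pos]
  change 2 ^ (4 * g) * rootDiscr γ = 2 ^ (4 * g) * rootDiscr β * _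
  rw [rootDiscr_eq_of_prod_X_sub_C_eq hγβ, hβ_affine, rootDiscr_affine, hchoose]
  ring

/-- Let `C : y² + Q(x)y = P(x)` and `D : z² + T(u)z = S(u)` be two odd-degree hyperelliptic
equations of genus `g` over a field `K` of characteristic not `2` defining isomorphic curves,
related by `x = e²u + c`, `y = e^(2g+1) z + t(u)` with `e ∈ K*`, `c ∈ K`, `t ∈ K[u]` of
degree ≤ g.  Then their discriminants satisfy `Δ_D = Δ_C · e^(-4g(2g+1))`, where
`Δ = 2^(4g)·disc(P + Q²/4)` and the discriminant of a monic polynomial with roots `β i`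
(in an algebraic closure `L` of `K`) is `∏_{i<j} (β i - β j)²`. -/
theorem hyperelliptic_discriminant_transformation (K : Type*) [Field K] (h2 : (2 : K) ≠ 0)
    (g : ℕ) (hg : 0 < g)
    (P Q S T t : K[X]) (e c : K) (he : e ≠ 0)
    (hP : P.Monic) (hPdeg : P.natDegree = 2 * g + 1) (hQ : Q.natDegree ≤ g)
    (hS : S.Monic) (hSdeg : S.natDegree = 2 * g + 1) (hT : T.natDegree ≤ g)
    (ht : t.natDegree ≤ g)
    (hrel1 : Q.comp (Polynomial.C (e ^ 2) * Polynomial.X + Polynomial.C c) + 2 * t =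
      Polynomial.C (e ^ (2 * g + 1)) * T)
    (hrel2 : P.comp (Polynomial.C (e ^ 2) * Polynomial.X + Polynomial.C c) - t ^ 2 -
        Q.comp (Polynomial.C (e ^ 2) * Polynomial.X + Polynomial.C c) * t =
      Polynomial.C (e ^ (2 * (2 * g + 1))) * S)
    (L : Type*) [Field L] [Algebra K L] [IsAlgClosure K L]
    (β γ : Fin (2 * g + 1) → L)
    (hβ : (P + Q ^ 2 * Polynomial.C ((4 : K)⁻¹)).map (algebraMap K L) =
      ∏ i : Fin (2 * g + 1), (Polynomial.X - Polynomial.C (β i)))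
    (hγ : (S + T ^ 2 * Polynomial.C ((4 : K)⁻¹)).map (algebraMap K L) =
      ∏ i : Fin (2 * g + 1), (Polynomial.X - Polynomial.C (γ i))) :
    (2 : L) ^ (4 * g) *
        ∏ i : Fin (2 * g + 1), ∏ j ∈ Finset.univ.filter (fun j => i < j), (γ i - γ j) ^ 2 =
      ((2 : L) ^ (4 * g) *
          ∏ i : Fin (2 * g + 1), ∏ j ∈ Finset.univ.filter (fun j => i < j), (β i - β j) ^ 2) *
        (algebraMap K L e ^ (4 * g * (2 * g + 1)))⁻¹ :=
  hyperelliptic_discriminant_transformation_general K h2 g P Q S T t e c he hrel1 hrel2 L β γ hβ hγ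
end
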